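/- Under the stated assumptions, for any finite multisets X, Y of admissible parameters and any admissible parameter ζ, the shifted tau-functions satisfy (τ[X ζ̄] · τ[Y ζ]) / (τ[X] · τ[Y]) = 1 + ⟨a[X]| F[X] · K · G[Y] |α⟩, where K = Δ(R,X,Y)(R−ζ)⁻¹ B[Y] − B[X](L−ζ)⁻¹ and Δ(R,X,Y) = ∏_{ξ∈X}(R−ξ) · ∏_{η∈Y}(R−η)⁻¹. -/

import Mathlib

/-!
Write `S = L − ζ`, `T = R − ζ`. The Sylvester equation gives `S A[Z] − A[Z] T = |α⟩⟨a[Z]|`, so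
`A[X] T` and `A[Y] T⁻¹` are rank-one perturbations of `S A[X]` and `S⁻¹ A[Y]`. By the matrix
determinant lemma (after `det (1 + M N) = det (1 + N M)`) this gives `τ[Xζ̄] = τ[X] (1 − w)` and
`τ[Yζ] = τ[Y] (1 + v)` with `w = ⟨a[X]|F[X] B[X] S⁻¹|α⟩` and `v = ⟨a[Y]|T⁻¹ B[Y] G[Y]|α⟩`.
Since `A[X] Δ = A[Y]`, one has
`(1 + B[X] A[X]) Δ T⁻¹ B[Y] − B[X] S⁻¹ (1 + A[Y] B[Y]) = K + B[X] S⁻¹ |α⟩⟨a[Y]| T⁻¹ B[Y]`;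
multiplying by `F[X]` and `G[Y]` and pairing with `⟨a[X]|`, `|α⟩` yields
`⟨a[X]|F[X] K G[Y]|α⟩ = v − w − w v`, i.e. `(1 − w)(1 + v)`.
-/

open Matrix

noncomputable section

/-- The diagonal matrix `∏_{ξ ∈ X} (diagonal d − ξ·1)` for a multiset `X` of parameters. -/
def sProd {n : ℕ} (d : Fin n → ℂ) (X : Multiset ℂ) : Matrix (Fin n) (Fin n) ℂ :=
  Matrix.diagonal fun i => (X.map fun ξ => d i - ξ).prod

/-- The multiset-shifted matrix `A[X] = A·∏_{ξ∈X}(R−ξ)⁻¹`. -/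
def shA {n : ℕ} (r : Fin n → ℂ) (A : Matrix (Fin n) (Fin n) ℂ) (X : Multiset ℂ) :
    Matrix (Fin n) (Fin n) ℂ :=
  A * (sProd r X)⁻¹

/-- The multiset-shifted matrix `B[X] = B·∏_{ξ∈X}(L−ξ)`. -/
def shB {n : ℕ} (l : Fin n → ℂ) (B : Matrix (Fin n) (Fin n) ℂ) (X : Multiset ℂ) :
    Matrix (Fin n) (Fin n) ℂ :=
  B * sProd l X

/-- The shifted tau-function `τ[X] = det(1 + A[X] B[X])`. -/
def shtau {n : ℕ} (l r : Fin n → ℂ) (A B : Matrix (Fin n) (Fin n) ℂ) (X : Multiset ℂ) : ℂ :=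
  (1 + shA r A X * shB l B X).det

/-- The shifted tau-function `σ[X] = τ[X]·⟨a[X]|(1+B[X]A[X])⁻¹|β⟩`. -/
def shsigma {n : ℕ} (l r a β : Fin n → ℂ) (A B : Matrix (Fin n) (Fin n) ℂ)
    (X : Multiset ℂ) : ℂ :=
  shtau l r A B X *
    (Matrix.vecMul (Matrix.vecMul a (sProd r X)⁻¹) (1 + shB l B X * shA r A X)⁻¹ ⬝ᵥ β)

/-- The shifted tau-function `ρ[X] = τ[X]·⟨b[X]|(1+A[X]B[X])⁻¹|α⟩`. -/
def shrho {n : ℕ} (l r b α : Fin n → ℂ) (A B : Matrix (Fin n) (Fin n) ℂ)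
    (X : Multiset ℂ) : ℂ :=
  shtau l r A B X *
    (Matrix.vecMul (Matrix.vecMul b (sProd l X)) (1 + shA r A X * shB l B X)⁻¹ ⬝ᵥ α)

/-- A parameter `ξ` is admissible if `R − ξ·1` and `L − ξ·1` are invertible. -/
def Adm {n : ℕ} (l r : Fin n → ℂ) (ξ : ℂ) : Prop :=
  IsUnit (Matrix.diagonal r - ξ • (1 : Matrix (Fin n) (Fin n) ℂ)) ∧
    IsUnit (Matrix.diagonal l - ξ • (1 : Matrix (Fin n) (Fin n) ℂ))

/-- `Γ_ξ(Y, X) = ∏_{η∈Y}(ξ−η) / ∏_{η∈X, η≠ξ}(ξ−η)`. -/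
def Gam (Y : Multiset ℂ) (X : Finset ℂ) (ξ : ℂ) : ℂ :=
  (Y.map fun η => ξ - η).prod / ∏ η ∈ X.erase ξ, (ξ - η)

namespace Matrix

variable {ι K : Type*} [Fintype ι] [CommRing K]

theorem dotProduct_vecMul_mul_vecMulVec_mul (x u y z : ι → K) (M N : Matrix ι ι K) :
    x ᵥ* (M * vecMulVec u y * N) ⬝ᵥ z = (x ᵥ* M ⬝ᵥ u) * (y ᵥ* N ⬝ᵥ z) := by
  rw [mul_vecMulVec, vecMulVec_mul, vecMul_vecMulVec, smul_dotProduct, dotProduct_mulVec,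
    smul_eq_mul]

variable [DecidableEq ι]

theorem isUnit_one_add_mul_comm {A B : Matrix ι ι K} (h : IsUnit (1 + A * B)) :
    IsUnit (1 + B * A) := by
  rw [isUnit_iff_isUnit_det, det_one_add_mul_comm, ← isUnit_iff_isUnit_det]
  exact h

theorem det_add_vecMulVec {M : Matrix ι ι K} (hM : IsUnit M.det) (u v : ι → K) :
    (M + vecMulVec u v).det = M.det * (1 + v ᵥ* M⁻¹ ⬝ᵥ u) := by
  rw [vecMulVec_eq (ι := Unit), det_add_replicateCol_mul_replicateRow (ι := Unit) hM,
    det_unique (n := Unit), ← replicateRow_vecMul, add_apply, one_apply_eq,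
    replicateRow_mul_replicateCol_apply]

theorem sub_smul_one_mul_sub_mul_sub_smul_one (L R M : Matrix ι ι K) (ζ : K) :
    (L - ζ • 1) * M - M * (R - ζ • 1) = L * M - M * R := by
  simp only [sub_mul, mul_sub, smul_mul_assoc, mul_smul_comm, one_mul, mul_one]
  abel

section Sylvester

variable {S T A B : Matrix ι ι K} {α c : ι → K}

theorem det_one_add_mul_mul_mul_inv_of_sylvester (hS : IsUnit S) (hAB : IsUnit (1 + A * B))
    (hsyl : S * A - A * T = vecMulVec α c) :
    (1 + A * T * (B * S⁻¹)).det
      = (1 + A * B).det * (1 - c ᵥ* ((1 + B * A)⁻¹ * B * S⁻¹) ⬝ᵥ α) := by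
  have hS' := (isUnit_iff_isUnit_det S).mp hS
  have hAT : S⁻¹ * (A * T) = A - vecMulVec (S⁻¹ *ᵥ α) c := by
    rw [← mul_vecMulVec, ← hsyl, mul_sub, nonsing_inv_mul_cancel_left _ _ hS', sub_sub_cancel]
  have hBA : 1 + B * S⁻¹ * (A * T) = (1 + B * A) + vecMulVec (-((B * S⁻¹) *ᵥ α)) c := by
    rw [mul_assoc, hAT, mul_sub, mul_vecMulVec, mulVec_mulVec, neg_vecMulVec]
    abel
  rw [det_one_add_mul_comm, hBA,
    det_add_vecMulVec ((isUnit_iff_isUnit_det _).mp (isUnit_one_add_mul_comm hAB)),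
    det_one_add_mul_comm B A, dotProduct_neg, ← dotProduct_mulVec, mulVec_mulVec,
    ← sub_eq_add_neg, dotProduct_mulVec, mul_assoc]

theorem det_one_add_mul_inv_mul_mul_of_sylvester (hT : IsUnit T) (hAB : IsUnit (1 + A * B))
    (hsyl : S * A - A * T = vecMulVec α c) :
    (1 + A * T⁻¹ * (B * S)).det
      = (1 + A * B).det * (1 + c ᵥ* (T⁻¹ * B * (1 + A * B)⁻¹) ⬝ᵥ α) := by
  have hT' := (isUnit_iff_isUnit_det T).mp hT
  have hAT : S * (A * T⁻¹) = A + vecMulVec α (c ᵥ* T⁻¹) := by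
    rw [← vecMulVec_mul, ← mul_assoc, ← sub_add_cancel (S * A) (A * T), hsyl, add_mul,
      mul_nonsing_inv_cancel_right _ _ hT', add_comm]
  have hAB' : 1 + S * (A * T⁻¹ * B) = (1 + A * B) + vecMulVec α (c ᵥ* (T⁻¹ * B)) := by
    rw [← mul_assoc, hAT, add_mul, vecMulVec_mul, vecMul_vecMul, add_assoc]
  rw [← mul_assoc, det_one_add_mul_comm, hAB',
    det_add_vecMulVec ((isUnit_iff_isUnit_det _).mp hAB), vecMul_vecMul]

end Sylvester

section Bilinear

variable {S T AX BX AY BY Δ : Matrix ι ι K} {α aX aY : ι → K}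

theorem one_add_mul_mul_sub_mul_mul_one_add (hS : IsUnit S) (hT : IsUnit T)
    (hAΔ : AX * Δ = AY) (hsyl : S * AY - AY * T = vecMulVec α aY) :
    (1 + BX * AX) * (Δ * T⁻¹ * BY) - BX * S⁻¹ * (1 + AY * BY)
      = (Δ * T⁻¹ * BY - BX * S⁻¹) + BX * S⁻¹ * vecMulVec α aY * (T⁻¹ * BY) := by
  have hAT : AY * T⁻¹ - S⁻¹ * AY = S⁻¹ * (S * AY - AY * T) * T⁻¹ := by
    rw [mul_sub, sub_mul, nonsing_inv_mul_cancel_left _ _ ((isUnit_iff_isUnit_det S).mp hS),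
      mul_assoc, mul_assoc, mul_nonsing_inv _ ((isUnit_iff_isUnit_det T).mp hT), mul_one]
  calc (1 + BX * AX) * (Δ * T⁻¹ * BY) - BX * S⁻¹ * (1 + AY * BY)
      = (Δ * T⁻¹ * BY - BX * S⁻¹) + BX * (AX * Δ * T⁻¹ - S⁻¹ * AY) * BY := by noncomm_ring
    _ = (Δ * T⁻¹ * BY - BX * S⁻¹) + BX * S⁻¹ * vecMulVec α aY * (T⁻¹ * BY) := by
      rw [hAΔ, hAT, hsyl]; simp only [mul_assoc]

theorem one_sub_mul_one_add_of_sylvester (hS : IsUnit S) (hT : IsUnit T)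
    (hX : IsUnit (1 + AX * BX)) (hY : IsUnit (1 + AY * BY))
    (hAΔ : AX * Δ = AY) (haΔ : aX ᵥ* Δ = aY) (hsyl : S * AY - AY * T = vecMulVec α aY) :
    (1 - aX ᵥ* ((1 + BX * AX)⁻¹ * BX * S⁻¹) ⬝ᵥ α)
        * (1 + aY ᵥ* (T⁻¹ * BY * (1 + AY * BY)⁻¹) ⬝ᵥ α)
      = 1 + aX ᵥ* ((1 + BX * AX)⁻¹ * (Δ * T⁻¹ * BY - BX * S⁻¹) * (1 + AY * BY)⁻¹) ⬝ᵥ α := by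
  set F := (1 + BX * AX)⁻¹
  set G := (1 + AY * BY)⁻¹
  have hF : F * (1 + BX * AX) = 1 :=
    nonsing_inv_mul _ ((isUnit_iff_isUnit_det _).mp (isUnit_one_add_mul_comm hX))
  have hG : (1 + AY * BY) * G = 1 := mul_nonsing_inv _ ((isUnit_iff_isUnit_det _).mp hY)
  have hK : F * (Δ * T⁻¹ * BY - BX * S⁻¹) * G
      = Δ * (T⁻¹ * BY * G) - F * BX * S⁻¹
        - F * BX * S⁻¹ * vecMulVec α aY * (T⁻¹ * BY * G) := by
    have hF' : ∀ M, F * ((1 + BX * AX) * M) = M := fun M => by rw [← mul_assoc, hF, one_mul]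
    rw [eq_sub_of_add_eq (one_add_mul_mul_sub_mul_mul_one_add (BX := BX) (BY := BY) hS hT hAΔ
      hsyl).symm, mul_sub, mul_sub, sub_mul, sub_mul, hF']
    simp only [mul_assoc, hG, mul_one]
  rw [hK, vecMul_sub, vecMul_sub, sub_dotProduct, sub_dotProduct, ← vecMul_vecMul aX Δ, haΔ,
    dotProduct_vecMul_mul_vecMulVec_mul]
  ring

end Bilinear

end Matrix

theorem sProd_zero {n : ℕ} (d : Fin n → ℂ) : sProd d 0 = 1 := by
  simp [sProd]

theorem sProd_cons {n : ℕ} (d : Fin n → ℂ) (ζ : ℂ) (Y : Multiset ℂ) :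
    sProd d (ζ ::ₘ Y) = (diagonal d - ζ • 1) * sProd d Y := by
  rw [sProd, sProd, smul_one_eq_diagonal, diagonal_sub, diagonal_mul_diagonal]
  simp

theorem isUnit_sProd {n : ℕ} {d : Fin n → ℂ} {X : Multiset ℂ}
    (hX : ∀ ξ ∈ X, IsUnit (diagonal d - ξ • (1 : Matrix (Fin n) (Fin n) ℂ))) :
    IsUnit (sProd d X) := by
  induction X using Multiset.induction_on with
  | empty => rw [sProd_zero]; exact isUnit_one
  | cons ξ X ih =>
    rw [sProd_cons]
    exact (hX ξ (Multiset.mem_cons_self ξ X)).mul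
      (ih fun η hη => hX η (Multiset.mem_cons_of_mem hη))

theorem commute_diagonal_sProd_inv {n : ℕ} (d e : Fin n → ℂ) (X : Multiset ℂ) :
    Commute (diagonal d) (sProd e X)⁻¹ := by
  rw [sProd, inv_diagonal]
  exact commute_diagonal _ _

theorem commute_diagonal_sub_smul_one_sProd {n : ℕ} (d e : Fin n → ℂ) (ζ : ℂ) (X : Multiset ℂ) :
    Commute (diagonal d - ζ • 1) (sProd e X) :=
  (commute_diagonal _ _).sub_left ((Commute.one_left _).smul_left ζ)

theorem shA_cons {n : ℕ} (r : Fin n → ℂ) (A : Matrix (Fin n) (Fin n) ℂ) (ζ : ℂ)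
    (Y : Multiset ℂ) : shA r A (ζ ::ₘ Y) = shA r A Y * (diagonal r - ζ • 1)⁻¹ := by
  rw [shA, shA, sProd_cons, Matrix.mul_inv_rev, mul_assoc]

theorem shB_cons {n : ℕ} (l : Fin n → ℂ) (B : Matrix (Fin n) (Fin n) ℂ) (ζ : ℂ)
    (Y : Multiset ℂ) : shB l B (ζ ::ₘ Y) = shB l B Y * (diagonal l - ζ • 1) := by
  rw [shB, shB, sProd_cons, (commute_diagonal_sub_smul_one_sProd l l ζ Y).eq, mul_assoc]

theorem shA_sylvester {n : ℕ} {l r α a : Fin n → ℂ} {A : Matrix (Fin n) (Fin n) ℂ}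
    (hA : diagonal l * A - A * diagonal r = vecMulVec α a) (ζ : ℂ) (X : Multiset ℂ) :
    (diagonal l - ζ • 1) * shA r A X - shA r A X * (diagonal r - ζ • 1)
      = vecMulVec α (a ᵥ* (sProd r X)⁻¹) := by
  rw [sub_smul_one_mul_sub_mul_sub_smul_one, shA, mul_assoc A,
    ← (commute_diagonal_sProd_inv r r X).eq, ← mul_assoc, ← mul_assoc, ← sub_mul, hA,
    vecMulVec_mul]

theorem shA_mul_sProd_mul_sProd_inv {n : ℕ} {r : Fin n → ℂ} {X : Multiset ℂ}
    (hX : IsUnit (sProd r X)) (A : Matrix (Fin n) (Fin n) ℂ) (Y : Multiset ℂ) :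
    shA r A X * (sProd r X * (sProd r Y)⁻¹) = shA r A Y := by
  rw [shA, shA, mul_assoc, nonsing_inv_mul_cancel_left _ _ ((isUnit_iff_isUnit_det _).mp hX)]

theorem statement4_general {n : ℕ} (l r : Fin n → ℂ) (α a : Fin n → ℂ)
    (A B : Matrix (Fin n) (Fin n) ℂ)
    (hA : Matrix.diagonal l * A - A * Matrix.diagonal r = Matrix.vecMulVec α a)
    (X Y : Multiset ℂ) (ζ : ℂ)
    (hX : ∀ ξ ∈ X, Adm l r ξ) (hζ : Adm l r ζ)
    (hiX : IsUnit (1 + shA r A X * shB l B X))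
    (hiY : IsUnit (1 + shA r A Y * shB l B Y)) :
    (1 + (shA r A X * (Matrix.diagonal r - ζ • 1)) *
          (shB l B X * (Matrix.diagonal l - ζ • 1)⁻¹)).det *
        shtau l r A B (ζ ::ₘ Y) / (shtau l r A B X * shtau l r A B Y)
      = 1 + Matrix.vecMul (Matrix.vecMul a (sProd r X)⁻¹)
          ((1 + shB l B X * shA r A X)⁻¹ *
            (sProd r X * (sProd r Y)⁻¹ * (Matrix.diagonal r - ζ • 1)⁻¹ * shB l B Y
              - shB l B X * (Matrix.diagonal l - ζ • 1)⁻¹) *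
            (1 + shA r A Y * shB l B Y)⁻¹) ⬝ᵥ α := by
  have hPX : IsUnit (sProd r X) := isUnit_sProd fun ξ hξ => (hX ξ hξ).1
  have hAΔ := shA_mul_sProd_mul_sProd_inv hPX A Y
  have haΔ : a ᵥ* (sProd r X)⁻¹ ᵥ* (sProd r X * (sProd r Y)⁻¹) = a ᵥ* (sProd r Y)⁻¹ := by
    rw [vecMul_vecMul, nonsing_inv_mul_cancel_left _ _ ((isUnit_iff_isUnit_det _).mp hPX)]
  have hτX := ((isUnit_iff_isUnit_det _).mp hiX).ne_zero
  have hτY := ((isUnit_iff_isUnit_det _).mp hiY).ne_zero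
  rw [← one_sub_mul_one_add_of_sylvester hζ.2 hζ.1 hiX hiY hAΔ haΔ (shA_sylvester hA ζ Y),
    det_one_add_mul_mul_mul_inv_of_sylvester hζ.2 hiX (shA_sylvester hA ζ X), shtau, shtau, shtau,
    shA_cons, shB_cons, det_one_add_mul_inv_mul_mul_of_sylvester hζ.1 hiY (shA_sylvester hA ζ Y)]
  field_simp

/-- `(τ[Xζ̄]·τ[Yζ])/(τ[X]·τ[Y]) = 1 + ⟨a[X]|F[X]·K·G[Y]|α⟩` with
`K = Δ(R,X,Y)(R−ζ)⁻¹B[Y] − B[X](L−ζ)⁻¹` and `Δ(R,X,Y) = ∏_{ξ∈X}(R−ξ)·∏_{η∈Y}(R−η)⁻¹`. -/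
theorem statement4 {n : ℕ} (hn : 1 ≤ n) (l r : Fin n → ℂ)
    (hlr : ∀ j k, l j ≠ r k) (α β a b : Fin n → ℂ)
    (A B : Matrix (Fin n) (Fin n) ℂ)
    (hA : Matrix.diagonal l * A - A * Matrix.diagonal r = Matrix.vecMulVec α a)
    (hB : Matrix.diagonal r * B - B * Matrix.diagonal l = Matrix.vecMulVec β b)
    (X Y : Multiset ℂ) (ζ : ℂ)
    (hX : ∀ ξ ∈ X, Adm l r ξ) (hY : ∀ ξ ∈ Y, Adm l r ξ) (hζ : Adm l r ζ)
    (hiX : IsUnit (1 + shA r A X * shB l B X))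
    (hiY : IsUnit (1 + shA r A Y * shB l B Y))
    (hiXz : IsUnit (1 + (shA r A X * (Matrix.diagonal r - ζ • 1)) *
        (shB l B X * (Matrix.diagonal l - ζ • 1)⁻¹)))
    (hiYz : IsUnit (1 + shA r A (ζ ::ₘ Y) * shB l B (ζ ::ₘ Y))) :
    (1 + (shA r A X * (Matrix.diagonal r - ζ • 1)) *
          (shB l B X * (Matrix.diagonal l - ζ • 1)⁻¹)).det *
        shtau l r A B (ζ ::ₘ Y) / (shtau l r A B X * shtau l r A B Y)
      = 1 + Matrix.vecMul (Matrix.vecMul a (sProd r X)⁻¹)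
          ((1 + shB l B X * shA r A X)⁻¹ *
            (sProd r X * (sProd r Y)⁻¹ * (Matrix.diagonal r - ζ • 1)⁻¹ * shB l B Y
              - shB l B X * (Matrix.diagonal l - ζ • 1)⁻¹) *
            (1 + shA r A Y * shB l B Y)⁻¹) ⬝ᵥ α :=
  statement4_general l r α a A B hA X Y ζ hX hζ hiX hiY
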